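/- arXiv:2602.19999 — 3 statements merged into one kernel-verified Lean document; each statement's English description precedes it below -/
import Mathlib

section
/- Let q ≥ 0 and p ∈ ℝ. Every positive classical solution u of Δu + |∇u|^q u^p = 0 on all of ℝ² is constant. -/
/-
Since the nonlinear term is nonnegative, `u` is a positive superharmonic function on the plane,
and such functions are constant. In dimension two `log ‖y - c‖²` is harmonic, so on an annulus
`r ≤ ‖y - c‖ ≤ R` the minimum principle bounds `u + ε log ‖y - c‖²` below by its minimum over
the two boundary circles. Because `u ≥ 0`, the outer circle is harmless once `R` is large, and
letting `ε → 0` shows that `u x` is at least the minimum of `u` on any small circle around `c`,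
hence at least `u c` by continuity.
-/

open scoped BigOperators

/-- The Euclidean Laplacian of `u : ℝⁿ → ℝ`, defined as the sum of the second
partial derivatives in the coordinate directions. -/
noncomputable def elaplacian {n : ℕ} (u : EuclideanSpace ℝ (Fin n) → ℝ)
    (x : EuclideanSpace ℝ (Fin n)) : ℝ :=
  ∑ i : Fin n, fderiv ℝ (fun y => fderiv ℝ u y (EuclideanSpace.single i 1)) x
    (EuclideanSpace.single i 1)

open Filter Topology Metric Laplacian InnerProductSpace

theorem le_of_forall_pos_sub_mul_le {a b C : ℝ} (h : ∀ ε > 0, b - ε * C ≤ a) : b ≤ a := by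
  have hlim : Tendsto (fun ε => b - ε * C) (𝓝[>] 0) (𝓝 b) := by
    have hcont : Continuous fun ε : ℝ => b - ε * C := by fun_prop
    simpa using (hcont.tendsto 0).mono_left nhdsWithin_le_nhds
  exact le_of_tendsto hlim (eventually_nhdsWithin_of_forall h)

theorem hasDerivAt_quadratic (a b w t : ℝ) :
    HasDerivAt (fun s => a + b * s + w * s ^ 2) (b + 2 * w * t) t :=
  ((((hasDerivAt_id' t).const_mul b).const_add a).fun_add
    ((hasDerivAt_pow 2 t).const_mul w)).congr_deriv (by norm_num; ring)

theorem deriv_deriv_quadratic (a b w : ℝ) :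
    deriv (deriv fun s => a + b * s + w * s ^ 2) 0 = 2 * w := by
  have hd : deriv (fun s => a + b * s + w * s ^ 2) = fun t => b + 2 * w * t :=
    funext fun t => (hasDerivAt_quadratic a b w t).deriv
  rw [hd]
  simp

theorem deriv_deriv_log_quadratic {a : ℝ} (ha : a ≠ 0) (b w : ℝ) :
    deriv (deriv fun s => Real.log (a + b * s + w * s ^ 2)) 0 = 2 * w / a - (b / a) ^ 2 := by
  have hq : ∀ᶠ t in 𝓝 (0 : ℝ), a + b * t + w * t ^ 2 ≠ 0 :=
    (hasDerivAt_quadratic a b w 0).continuousAt.eventually_ne (by simpa using ha)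
  have hd : deriv (fun s => Real.log (a + b * s + w * s ^ 2)) =ᶠ[𝓝 0]
      fun t => (b + 2 * w * t) / (a + b * t + w * t ^ 2) := by
    filter_upwards [hq] with t ht
    exact ((hasDerivAt_quadratic a b w t).log ht).deriv
  have hdd := (hasDerivAt_quadratic b (2 * w) 0 0).fun_div (hasDerivAt_quadratic a b w 0)
    (by simpa using ha)
  norm_num at hdd
  rw [hd.deriv_eq, hdd.deriv]
  field_simp

theorem IsLocalMin.deriv_deriv_nonneg {g : ℝ → ℝ} {t : ℝ} (hmin : IsLocalMin g t)
    (hg : ContinuousAt g t) : 0 ≤ deriv (deriv g) t := by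
  by_contra! hneg
  -- otherwise `t` is also a local maximum, so `g` is locally constant
  have hconst : g =ᶠ[𝓝 t] fun _ => g t :=
    (hmin.and (isLocalMax_of_deriv_deriv_neg hneg hmin.deriv_eq_zero hg)).mono
      fun _ h => le_antisymm h.2 h.1
  have hderiv : deriv g =ᶠ[𝓝 t] fun _ => 0 := by
    simpa using hconst.deriv
  rw [hderiv.deriv_eq, deriv_const] at hneg
  exact lt_irrefl 0 hneg

section NormedSpace

variable {E : Type*} [NormedAddCommGroup E] [NormedSpace ℝ E] {f : E → ℝ} {x : E}

theorem ContDiffAt.iteratedFDeriv_two_eq_deriv_deriv (hf : ContDiffAt ℝ 2 f x) (v : E) :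
    iteratedFDeriv ℝ 2 f x ![v, v] = deriv (deriv fun t : ℝ => f (x + t • v)) 0 := by
  have hline : Tendsto (fun t : ℝ => x + t • v) (𝓝 0) (𝓝 x) := by
    have : Continuous fun t : ℝ => x + t • v := by fun_prop
    simpa using this.tendsto 0
  have hderiv : deriv (fun t : ℝ => f (x + t • v)) =ᶠ[𝓝 0]
      fun t => iteratedFDeriv ℝ 1 f (x + t • v) (fun _ => v) := by
    filter_upwards [hline.eventually (hf.eventually (by simp))] with t ht
    rw [(ht.differentiableAt two_ne_zero).deriv_comp_add_smul, iteratedFDeriv_one_apply]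
  rw [hderiv.deriv_eq,
    ContDiffAt.deriv_fderiv_add_smul (n := 1) (by rw [zero_smul, add_zero]; exact hf)]
  simp only [zero_smul, add_zero]
  congr 1
  ext i
  fin_cases i <;> rfl

theorem IsLocalMin.iteratedFDeriv_two_nonneg (hmin : IsLocalMin f x) (hf : ContDiffAt ℝ 2 f x)
    (v : E) : 0 ≤ iteratedFDeriv ℝ 2 f x ![v, v] := by
  have hline : Continuous fun t : ℝ => x + t • v := by fun_prop
  rw [hf.iteratedFDeriv_two_eq_deriv_deriv]
  refine IsLocalMin.deriv_deriv_nonneg ?_ ?_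
  · exact IsLocalMin.comp_continuous (by simpa using hmin) hline.continuousAt
  · exact hf.continuousAt.comp_of_eq hline.continuousAt (by simp)

end NormedSpace

theorem frontier_closedBall_diff_ball_subset {X : Type*} [PseudoMetricSpace X] (c : X)
    (r R : ℝ) : frontier (closedBall c R \ ball c r) ⊆ sphere c r ∪ sphere c R := by
  rintro y ⟨hy_cl, hy_int⟩
  obtain ⟨hyR, hyr⟩ := (isClosed_closedBall.sdiff isOpen_ball).closure_subset hy_cl
  by_contra hsphere
  simp only [Set.mem_union, mem_sphere, not_or] at hsphere
  simp only [mem_closedBall, mem_ball, not_lt] at hyR hyr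
  refine hy_int (interior_maximal (t := ball c R \ closedBall c r) ?_
    (isOpen_ball.sdiff isClosed_closedBall) ⟨?_, ?_⟩)
  · exact Set.sdiff_subset_sdiff ball_subset_closedBall ball_subset_closedBall
  · exact mem_ball.2 (lt_of_le_of_ne hyR hsphere.2)
  · simpa using lt_of_le_of_ne hyr (Ne.symm hsphere.1)

section InnerProductSpace

variable {E : Type*} [NormedAddCommGroup E] [InnerProductSpace ℝ E]

theorem norm_add_smul_sub_sq (x v c : E) (t : ℝ) :
    ‖x + t • v - c‖ ^ 2 = ‖x - c‖ ^ 2 + 2 * inner ℝ (x - c) v * t + ‖v‖ ^ 2 * t ^ 2 := by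
  rw [add_sub_right_comm, norm_add_sq_real, inner_smul_right, norm_smul, mul_pow,
    Real.norm_eq_abs, sq_abs]
  ring

variable [FiniteDimensional ℝ E]

theorem IsLocalMin.laplacian_nonneg {f : E → ℝ} {x : E} (hmin : IsLocalMin f x)
    (hf : ContDiffAt ℝ 2 f x) : 0 ≤ Δ f x := by
  rw [laplacian_eq_iteratedFDeriv_stdOrthonormalBasis]
  exact Finset.sum_nonneg fun i _ => hmin.iteratedFDeriv_two_nonneg hf _

theorem laplacian_norm_sub_sq (c x : E) :
    Δ (fun y => ‖y - c‖ ^ 2) x = 2 * Module.finrank ℝ E := by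
  have hf : ContDiffAt ℝ 2 (fun y : E => ‖y - c‖ ^ 2) x :=
    ((contDiff_norm_sq ℝ).comp (contDiff_id.sub contDiff_const)).contDiffAt
  rw [laplacian_eq_iteratedFDeriv_stdOrthonormalBasis]
  simp_rw [hf.iteratedFDeriv_two_eq_deriv_deriv, norm_add_smul_sub_sq, deriv_deriv_quadratic,
    (stdOrthonormalBasis ℝ E).orthonormal.1]
  simp [mul_comm]

theorem laplacian_log_norm_sub_sq {c x : E} (hx : x ≠ c) :
    Δ (fun y => Real.log (‖y - c‖ ^ 2)) x = (2 * Module.finrank ℝ E - 4) / ‖x - c‖ ^ 2 := by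
  have hx' : ‖x - c‖ ^ 2 ≠ 0 := by simpa [sub_eq_zero] using hx
  have hf : ContDiffAt ℝ 2 (fun y : E => Real.log (‖y - c‖ ^ 2)) x :=
    (Real.contDiffAt_log.2 hx').comp x
      ((contDiff_norm_sq ℝ).comp (contDiff_id.sub contDiff_const)).contDiffAt
  rw [laplacian_eq_iteratedFDeriv_stdOrthonormalBasis]
  simp_rw [hf.iteratedFDeriv_two_eq_deriv_deriv, norm_add_smul_sub_sq,
    deriv_deriv_log_quadratic hx', (stdOrthonormalBasis ℝ E).orthonormal.1]
  simp only [one_pow, mul_one, div_pow, mul_pow, Finset.sum_sub_distrib, ← Finset.sum_div,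
    ← Finset.mul_sum, (stdOrthonormalBasis ℝ E).sum_sq_inner_left, Finset.sum_const,
    Finset.card_univ, Fintype.card_fin, nsmul_eq_mul]
  field_simp
  ring

theorem IsCompact.le_of_forall_mem_frontier_le_of_laplacian_nonpos [Nontrivial E] {K : Set E}
    (hK : IsCompact K) {v : E → ℝ} (hcont : ContinuousOn v K)
    (hv : ∀ y ∈ interior K, ContDiffAt ℝ 2 v y ∧ Δ v y ≤ 0) {m : ℝ}
    (hm : ∀ y ∈ frontier K, m ≤ v y) {x : E} (hx : x ∈ K) : m ≤ v x := by
  refine le_of_forall_pos_sub_mul_le (C := diam K ^ 2) fun δ hδ => ?_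
  have hsq : ContDiff ℝ 2 fun y : E => ‖y - x‖ ^ 2 :=
    (contDiff_norm_sq ℝ).comp (contDiff_id.sub contDiff_const)
  -- the perturbation makes the Laplacian strictly negative, ruling out an interior minimum
  set w := v - δ • fun y => ‖y - x‖ ^ 2
  have hw : ∀ y, w y = v y - δ * ‖y - x‖ ^ 2 := fun y => rfl
  obtain ⟨y, hyK, hymin⟩ :=
    hK.exists_isMinOn ⟨x, hx⟩ (hcont.sub (hsq.continuous.continuousOn.const_smul δ))
  have hy : y ∉ interior K := by
    intro hy
    obtain ⟨hvy, hΔvy⟩ := hv y hy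
    have hsqδ : ContDiffAt ℝ 2 (δ • fun y : E => ‖y - x‖ ^ 2) y := hsq.contDiffAt.const_smul δ
    have hmin := (hymin.isLocalMin (mem_interior_iff_mem_nhds.1 hy)).laplacian_nonneg
      (hvy.sub hsqδ)
    rw [hvy.laplacian_sub hsqδ, laplacian_smul δ hsq.contDiffAt, laplacian_norm_sub_sq,
      smul_eq_mul] at hmin
    have : (0 : ℝ) < Module.finrank ℝ E := by exact_mod_cast Module.finrank_pos
    nlinarith
  have hdist : ‖y - x‖ ≤ diam K := by
    rw [← dist_eq_norm]
    exact dist_le_diam_of_mem hK.isBounded hyK hx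
  calc m - δ * diam K ^ 2 ≤ v y - δ * ‖y - x‖ ^ 2 := by
        gcongr
        exact hm y ⟨subset_closure hyK, hy⟩
    _ = w y := (hw y).symm
    _ ≤ w x := hymin hx
    _ = v x := by simp [hw]

variable {u : E → ℝ} {b : ℝ}

theorem add_mul_log_le_of_forall_mem_sphere_le (hE : Module.finrank ℝ E = 2)
    (hu : ContDiff ℝ 2 u) (hb : ∀ y, b ≤ u y) (hΔ : ∀ y, Δ u y ≤ 0) {c : E} {r m ε : ℝ}
    (hr : 0 < r) (hm : ∀ y ∈ sphere c r, m ≤ u y) (hε : 0 < ε) {x : E} (hx : r ≤ dist x c) :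
    m + ε * Real.log (r ^ 2) ≤ u x + ε * Real.log (dist x c ^ 2) := by
  have : Nontrivial E := Module.nontrivial_of_finrank_eq_succ hE
  obtain ⟨R, hRm, hRx⟩ : ∃ R, m + ε * Real.log (r ^ 2) - b ≤ ε * Real.log (R ^ 2) ∧
      dist x c ≤ R :=
    (((Real.tendsto_log_atTop.comp (tendsto_pow_atTop two_ne_zero)).const_mul_atTop
      hε).eventually_ge_atTop _ |>.and (eventually_ge_atTop _)).exists
  set K := closedBall c R \ ball c r
  have hK : ∀ y ∈ K, ‖y - c‖ ^ 2 ≠ 0 := by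
    rintro y ⟨-, hy⟩
    rw [mem_ball, not_lt, dist_eq_norm] at hy
    exact pow_ne_zero 2 (hr.trans_le hy).ne'
  set g : E → ℝ := fun y => Real.log (‖y - c‖ ^ 2)
  have hg : ∀ y ∈ K, ContDiffAt ℝ 2 g y := fun y hy =>
    (Real.contDiffAt_log.2 (hK y hy)).comp y
      ((contDiff_norm_sq ℝ).comp (contDiff_id.sub contDiff_const)).contDiffAt
  have hεg : ∀ y ∈ K, ContDiffAt ℝ 2 (ε • g) y := fun y hy => (hg y hy).const_smul ε
  have hKc : IsCompact K := (isCompact_closedBall c R).diff isOpen_ball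
  have key := hKc.le_of_forall_mem_frontier_le_of_laplacian_nonpos (v := u + ε • g)
    (m := m + ε * Real.log (r ^ 2)) ?cont ?harm ?bdry (x := x)
    ⟨mem_closedBall.2 hRx, by simpa using hx⟩
  · simpa only [Pi.add_apply, Pi.smul_apply, smul_eq_mul, g, ← dist_eq_norm] using key
  case cont =>
    exact hu.continuous.continuousOn.add fun y hy => (hεg y hy).continuousAt.continuousWithinAt
  case harm =>
    intro y hy
    have hyK := interior_subset hy
    refine ⟨hu.contDiffAt.add (hεg y hyK), ?_⟩
    rw [hu.contDiffAt.laplacian_add (hεg y hyK), laplacian_smul ε (hg y hyK),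
      laplacian_log_norm_sub_sq (by simpa [sub_eq_zero] using hK y hyK), hE]
    norm_num [hΔ y]
  case bdry =>
    intro y hy
    rcases frontier_closedBall_diff_ball_subset c r R hy with hy | hy <;>
      rw [mem_sphere, dist_eq_norm] at hy <;>
      simp only [Pi.add_apply, Pi.smul_apply, smul_eq_mul, g, hy]
    · linarith [hm y (by simpa [dist_eq_norm] using hy)]
    · linarith [hb y]

theorem le_of_forall_mem_sphere_le_of_laplacian_nonpos (hE : Module.finrank ℝ E = 2)
    (hu : ContDiff ℝ 2 u) (hb : ∀ y, b ≤ u y) (hΔ : ∀ y, Δ u y ≤ 0) {c : E} {r m : ℝ}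
    (hr : 0 < r) (hm : ∀ y ∈ sphere c r, m ≤ u y) {x : E} (hx : r ≤ dist x c) : m ≤ u x := by
  refine le_of_forall_pos_sub_mul_le
    (C := Real.log (dist x c ^ 2) - Real.log (r ^ 2)) fun ε hε => ?_
  have := add_mul_log_le_of_forall_mem_sphere_le hE hu hb hΔ hr hm hε hx
  linarith

theorem le_of_laplacian_nonpos_of_forall_le (hE : Module.finrank ℝ E = 2) (hu : ContDiff ℝ 2 u)
    (hb : ∀ y, b ≤ u y) (hΔ : ∀ y, Δ u y ≤ 0) (x y : E) : u y ≤ u x := by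
  refine le_of_forall_sub_le fun ε hε => ?_
  obtain ⟨r, hr, hball⟩ := Metric.eventually_nhds_iff_ball.1
    ((hu.continuous.tendsto y).eventually (eventually_gt_nhds (sub_lt_self (u y) hε)))
  rcases lt_or_ge (dist x y) (r / 2) with hxy | hxy
  · exact (hball x (mem_ball.2 (by linarith))).le
  · refine le_of_forall_mem_sphere_le_of_laplacian_nonpos hE hu hb hΔ (half_pos hr)
      (fun z hz => ?_) hxy
    exact (hball z (mem_ball.2 (by rw [mem_sphere.1 hz]; linarith))).le

end InnerProductSpace

theorem elaplacian_eq_laplacian {n : ℕ} {u : EuclideanSpace ℝ (Fin n) → ℝ}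
    {x : EuclideanSpace ℝ (Fin n)} (hu : ContDiffAt ℝ 2 u x) : elaplacian u x = Δ u x := by
  have hdiff : DifferentiableAt ℝ (fderiv ℝ u) x :=
    (hu.fderiv_right (m := 1) (by norm_num)).differentiableAt one_ne_zero
  rw [laplacian_eq_iteratedFDeriv_orthonormalBasis u (EuclideanSpace.basisFun (Fin n) ℝ)]
  refine Finset.sum_congr rfl fun i _ => ?_
  rw [iteratedFDeriv_two_apply, EuclideanSpace.basisFun_apply,
    fderiv_clm_apply hdiff (differentiableAt_const _)]
  simp

theorem liouville_dim_two_general (p q : ℝ)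
    (u : EuclideanSpace ℝ (Fin 2) → ℝ)
    (hu : ContDiff ℝ 2 u)
    (hpos : ∀ x, 0 < u x)
    (heq : ∀ x, elaplacian u x + ‖gradient u x‖ ^ q * u x ^ p = 0) :
    ∀ x y, u x = u y := by
  have hΔ : ∀ x, Δ u x ≤ 0 := fun x => by
    have hsource : 0 ≤ ‖gradient u x‖ ^ q * u x ^ p :=
      mul_nonneg (Real.rpow_nonneg (norm_nonneg _) q) (Real.rpow_pos_of_pos (hpos x) p).le
    rw [← elaplacian_eq_laplacian hu.contDiffAt]
    linarith [heq x]
  have hE : Module.finrank ℝ (EuclideanSpace ℝ (Fin 2)) = 2 := finrank_euclideanSpace_fin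
  have hnonneg : ∀ x, 0 ≤ u x := fun x => (hpos x).le
  intro x y
  exact le_antisymm (le_of_laplacian_nonpos_of_forall_le hE hu hnonneg hΔ y x)
    (le_of_laplacian_nonpos_of_forall_le hE hu hnonneg hΔ x y)

/-- **Theorem 1.1, case (1).** For `q ≥ 0` and `p ∈ ℝ`, every positive classical
solution of `Δu + |∇u|^q u^p = 0` on all of `ℝ²` is constant. -/
theorem liouville_dim_two (p q : ℝ) (hq : 0 ≤ q)
    (u : EuclideanSpace ℝ (Fin 2) → ℝ)
    (hu : ContDiff ℝ 2 u)
    (hpos : ∀ x, 0 < u x)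
    (heq : ∀ x, elaplacian u x + ‖gradient u x‖ ^ q * u x ^ p = 0) :
    ∀ x y, u x = u y :=
  liouville_dim_two_general p q u hu hpos heq
end

section
/- Let n ≥ 1, let Ω ⊆ ℝ^n be open, let q ≥ 0 and p ∈ ℝ, set l = p + q − 1, and let u ∈ C³(Ω) with u > 0 on Ω satisfy Δu + |∇u|^q u^p = 0 on Ω. On the regular set Ω_r = {x ∈ Ω : |∇u(x)| > 0} define H = |∇ln u|², L = |∇ln u|^q · u^l and Z = L/H. Define A(x) = (2/n)(1+x)² − 2x² for x ∈ ℝ and B(x,y) = (4/n)(1+x)(1+y) − 4xy − 2l for x,y ∈ ℝ. Then for every β ∈ ℝ and every function σ : Ω → ℝ, at every point of Ω_r one has the identity ΔH = A(β)H² + A(σ)L² + B(β,σ)HL + [2(β−1)H + (2σ−q)L]·⟨∇ln u, ∇ln H⟩ + 2‖T(β,σ) − (tr T(β,σ)/n)·I‖², where T(β,σ) = u^{−1}∇²u − ((1+β) + σZ)·(∇ln u) ⊗ (∇ln u) is the symmetric n×n matrix field built from the Hessian matrix ∇²u, I is the identity matrix, tr denotes the trace, and ‖·‖ the Frobenius norm.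 -/
open scoped BigOperators RealInnerProductSpace

/-- The Hessian matrix of `u : ℝⁿ → ℝ` at `x`, with entries the second partial
derivatives in the coordinate directions. -/
noncomputable def ehessian {n : ℕ} (u : EuclideanSpace ℝ (Fin n) → ℝ)
    (x : EuclideanSpace ℝ (Fin n)) (i j : Fin n) : ℝ :=
  fderiv ℝ (fun y => fderiv ℝ u y (EuclideanSpace.single j 1)) x (EuclideanSpace.single i 1)


/-!
With `f = log u` the equation reads `Δf = -(L + H)` with `H = |∇f|²`, and
`u⁻¹∇²u = ∇²f + ∇f ⊗ ∇f`. Bochner's formula `ΔH = 2|∇²f|² + 2⟨∇f, ∇Δf⟩`, together with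
`L = H^(q/2) u^l` and `⟨∇f, ∇H⟩ = 2 ∇²f(∇f, ∇f)`, gives
`ΔH = 2|∇²f|² - 2lLH - (2 + qL/H)⟨∇f, ∇H⟩`. Now write `∇²f = T + (β + σZ) ∇f ⊗ ∇f` and split
`|T|² = |T - (tr T/n) I|² + (tr T)²/n`; since `tr T = -((1 + β)H + (1 + σ)L)`, expanding both
sides yields the identity.
-/

open Filter Topology

section DirDeriv

variable {E : Type*} [NormedAddCommGroup E] [NormedSpace ℝ E]

noncomputable def dirDeriv (v : E) (g : E → ℝ) (y : E) : ℝ := fderiv ℝ g y v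

variable {v w x : E} {g g₁ g₂ u : E → ℝ}

theorem Filter.EventuallyEq.dirDeriv_eq (h : g₁ =ᶠ[𝓝 x] g₂) :
    dirDeriv v g₁ x = dirDeriv v g₂ x := by
  rw [dirDeriv, dirDeriv, h.fderiv_eq]

theorem Filter.EventuallyEq.dirDeriv (h : g₁ =ᶠ[𝓝 x] g₂) :
    dirDeriv v g₁ =ᶠ[𝓝 x] dirDeriv v g₂ :=
  h.fderiv.mono fun y hy => by rw [_root_.dirDeriv, _root_.dirDeriv, hy]

theorem ContDiffAt.dirDeriv {m k : WithTop ℕ∞} (hg : ContDiffAt ℝ k g x) (hmk : m + 1 ≤ k) :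
    ContDiffAt ℝ m (dirDeriv v g) x :=
  (hg.fderiv_right hmk).clm_apply contDiffAt_const

theorem dirDeriv_add (h₁ : DifferentiableAt ℝ g₁ x) (h₂ : DifferentiableAt ℝ g₂ x) :
    dirDeriv v (fun y => g₁ y + g₂ y) x = dirDeriv v g₁ x + dirDeriv v g₂ x := by
  simp [dirDeriv, fderiv_fun_add h₁ h₂]

theorem dirDeriv_neg : dirDeriv v (fun y => -g y) x = -dirDeriv v g x := by
  simp [dirDeriv, fderiv_fun_neg]

theorem dirDeriv_sum {ι : Type*} (s : Finset ι) {G : ι → E → ℝ}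
    (hG : ∀ j ∈ s, DifferentiableAt ℝ (G j) x) :
    dirDeriv v (fun y => ∑ j ∈ s, G j y) x = ∑ j ∈ s, dirDeriv v (G j) x := by
  simp [dirDeriv, fderiv_fun_sum hG]

theorem dirDeriv_mul (h₁ : DifferentiableAt ℝ g₁ x) (h₂ : DifferentiableAt ℝ g₂ x) :
    dirDeriv v (fun y => g₁ y * g₂ y) x = g₁ x * dirDeriv v g₂ x + g₂ x * dirDeriv v g₁ x := by
  simp [dirDeriv, fderiv_fun_mul h₁ h₂]

theorem dirDeriv_sq (h : DifferentiableAt ℝ g x) :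
    dirDeriv v (fun y => g y ^ 2) x = 2 * g x * dirDeriv v g x := by
  simp [dirDeriv, fderiv_fun_pow 2 h]

theorem dirDeriv_inv (h : DifferentiableAt ℝ g x) (hx : g x ≠ 0) :
    dirDeriv v (fun y => (g y)⁻¹) x = -dirDeriv v g x / g x ^ 2 := by
  have hinv : HasFDerivAt (fun y => (g y)⁻¹) ((-(g x ^ 2)⁻¹) • fderiv ℝ g x) x :=
    (hasDerivAt_inv hx).comp_hasFDerivAt x h.hasFDerivAt
  simp [dirDeriv, hinv.fderiv, div_eq_inv_mul]

theorem dirDeriv_log (h : DifferentiableAt ℝ g x) (hx : g x ≠ 0) :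
    dirDeriv v (fun y => Real.log (g y)) x = dirDeriv v g x / g x := by
  simp only [dirDeriv, (h.hasFDerivAt.log hx).fderiv, smul_apply, smul_eq_mul]
  ring

theorem dirDeriv_rpow_mul_rpow (h₁ : DifferentiableAt ℝ g₁ x) (h₂ : DifferentiableAt ℝ g₂ x)
    (hx₁ : g₁ x ≠ 0) (hx₂ : g₂ x ≠ 0) (r s : ℝ) :
    dirDeriv v (fun y => g₁ y ^ r * g₂ y ^ s) x =
      g₁ x ^ r * g₂ x ^ s * (r * (dirDeriv v g₁ x / g₁ x) + s * (dirDeriv v g₂ x / g₂ x)) := by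
  rw [dirDeriv_mul (h₁.rpow_const (.inl hx₁)) (h₂.rpow_const (.inl hx₂))]
  simp only [dirDeriv, (h₁.hasFDerivAt.rpow_const (.inl hx₁)).fderiv,
    (h₂.hasFDerivAt.rpow_const (.inl hx₂)).fderiv, smul_apply, smul_eq_mul,
    Real.rpow_sub_one hx₁, Real.rpow_sub_one hx₂]
  ring

theorem dirDeriv_comm (hg : ContDiffAt ℝ 2 g x) :
    dirDeriv v (dirDeriv w g) x = dirDeriv w (dirDeriv v g) x := by
  have hd : DifferentiableAt ℝ (fderiv ℝ g) x :=
    (hg.fderiv_right le_rfl).differentiableAt one_ne_zero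
  have key (z : E) : fderiv ℝ (dirDeriv z g) x = (fderiv ℝ (fderiv ℝ g) x).flip z := by
    show fderiv ℝ (fun y => fderiv ℝ g y z) x = _
    simpa using fderiv_clm_apply (c := fderiv ℝ g) (u := fun _ => z) hd (differentiableAt_const z)
  simpa [dirDeriv, key] using hg.isSymmSndFDerivAt (by simp) v w

theorem dirDeriv_dirDeriv_log (hu : ContDiffAt ℝ 2 u x) (hx : u x ≠ 0) :
    dirDeriv v (dirDeriv w fun y => Real.log (u y)) x =
      dirDeriv v (dirDeriv w u) x / u x
        - dirDeriv v (fun y => Real.log (u y)) x * dirDeriv w (fun y => Real.log (u y)) x := by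
  have hnear : ∀ᶠ y in 𝓝 x, DifferentiableAt ℝ u y ∧ u y ≠ 0 :=
    (hu.eventually (by simp)).and (hu.continuousAt.eventually_ne hx) |>.mono
      fun y hy => ⟨hy.1.differentiableAt two_ne_zero, hy.2⟩
  have hlog : dirDeriv w (fun y => Real.log (u y)) =ᶠ[𝓝 x] fun y => (u y)⁻¹ * dirDeriv w u y :=
    hnear.mono fun y hy => by rw [dirDeriv_log hy.1 hy.2, div_eq_inv_mul]
  have hu1 : DifferentiableAt ℝ u x := hu.differentiableAt two_ne_zero
  have hdu : DifferentiableAt ℝ (dirDeriv w u) x :=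
    (hu.dirDeriv (m := 1) (by norm_num)).differentiableAt one_ne_zero
  rw [hlog.dirDeriv_eq, dirDeriv_mul (hu1.fun_inv hx) hdu, dirDeriv_inv hu1 hx,
    dirDeriv_log hu1 hx, dirDeriv_log hu1 hx]
  field_simp
  ring

end DirDeriv

section Algebra

variable {ι : Type*} [Fintype ι] [DecidableEq ι]

theorem sum_sq_sub_trace_div_card_mul_ite (T : Matrix ι ι ℝ) :
    ∑ i, ∑ j, (T i j - T.trace / Fintype.card ι * (if i = j then 1 else 0)) ^ 2 =
      ∑ i, ∑ j, T i j ^ 2 - T.trace ^ 2 / Fintype.card ι := by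
  set c := T.trace / Fintype.card ι
  have hexpand (i j : ι) : (T i j - c * (if i = j then 1 else 0)) ^ 2 =
      T i j ^ 2 - if i = j then 2 * c * T i j - c ^ 2 else 0 := by
    split_ifs <;> ring
  simp only [hexpand, Finset.sum_sub_distrib, Finset.sum_ite_eq, Finset.mem_univ, if_true,
    ← Finset.mul_sum, Finset.sum_const, Finset.card_univ, nsmul_eq_mul]
  rw [show ∑ i, T i i = T.trace from rfl]
  rcases eq_or_ne (Fintype.card ι : ℝ) 0 with hc | hc
  · simp [c, hc]
  · simp only [c]
    field_simp
    ring

theorem fundamental_identity_algebraic (D T : Matrix ι ι ℝ) (g : ι → ℝ) (h L W l q β σ : ℝ)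
    (hh : h = ∑ i, g i ^ 2) (hh0 : h ≠ 0) (htr : D.trace = -(L + h))
    (hW : W = 2 * ∑ i, ∑ j, D i j * g i * g j)
    (hT : ∀ i j, T i j = D i j - (β + σ * (L / h)) * (g i * g j)) :
    2 * ∑ i, ∑ j, D i j ^ 2 - 2 * l * L * h - (2 + q * (L / h)) * W =
      ((2 / Fintype.card ι) * (1 + β) ^ 2 - 2 * β ^ 2) * h ^ 2
        + ((2 / Fintype.card ι) * (1 + σ) ^ 2 - 2 * σ ^ 2) * L ^ 2
        + ((4 / Fintype.card ι) * (1 + β) * (1 + σ) - 4 * β * σ - 2 * l) * h * L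
        + (2 * (β - 1) * h + (2 * σ - q) * L) * (h⁻¹ * W)
        + 2 * ∑ i, ∑ j, (T i j - T.trace / Fintype.card ι * (if i = j then 1 else 0)) ^ 2 := by
  set k := β + σ * (L / h)
  have hc : (Fintype.card ι : ℝ) ≠ 0 := by
    rcases isEmpty_or_nonempty ι with hι | hι
    · simp [hh] at hh0
    · exact Nat.cast_ne_zero.2 Fintype.card_ne_zero
  have hTsq : ∑ i, ∑ j, T i j ^ 2 = ∑ i, ∑ j, D i j ^ 2 - k * W + k ^ 2 * h ^ 2 := by
    calc ∑ i, ∑ j, T i j ^ 2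
        = ∑ i, ∑ j, (D i j ^ 2 - k * (2 * (D i j * g i * g j)) + k ^ 2 * (g i ^ 2 * g j ^ 2)) :=
          Finset.sum_congr rfl fun i _ => Finset.sum_congr rfl fun j _ => by rw [hT]; ring
      _ = ∑ i, ∑ j, D i j ^ 2 - k * W + k ^ 2 * h ^ 2 := by
          simp only [Finset.sum_add_distrib, Finset.sum_sub_distrib, ← Finset.mul_sum,
            ← Finset.sum_mul, hW, hh]
          ring
  have htrT : T.trace = D.trace - k * h := by
    simp only [Matrix.trace, Matrix.diag, hT, Finset.sum_sub_distrib, ← Finset.mul_sum, hh, sq]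
  rw [sum_sq_sub_trace_div_card_mul_ite, hTsq, htrT, htr]
  simp only [k]
  field_simp
  ring

end Algebra

local notation "∂[" i "]" => dirDeriv (EuclideanSpace.single i (1 : ℝ))

section Euclidean

variable {n : ℕ} {x : EuclideanSpace ℝ (Fin n)} {f g u H L : EuclideanSpace ℝ (Fin n) → ℝ}

theorem gradient_apply_eq_dirDeriv (i : Fin n) : gradient g x i = ∂[i] g x := by
  rw [dirDeriv, ← inner_gradient_left, EuclideanSpace.inner_single_right]
  simp

theorem elaplacian_eq_sum (g : EuclideanSpace ℝ (Fin n) → ℝ) (x : EuclideanSpace ℝ (Fin n)) :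
    elaplacian g x = ∑ i, ∂[i] (∂[i] g) x :=
  rfl

theorem Filter.EventuallyEq.elaplacian_eq {g₁ g₂ : EuclideanSpace ℝ (Fin n) → ℝ}
    (h : g₁ =ᶠ[𝓝 x] g₂) : elaplacian g₁ x = elaplacian g₂ x :=
  Finset.sum_congr rfl fun _ _ => h.dirDeriv.dirDeriv_eq

theorem elaplacian_sum {ι : Type*} [Fintype ι] {G : ι → EuclideanSpace ℝ (Fin n) → ℝ}
    (hG : ∀ j, ContDiffAt ℝ 2 (G j) x) :
    elaplacian (fun y => ∑ j, G j y) x = ∑ j, elaplacian (G j) x := by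
  have hnear : ∀ᶠ y in 𝓝 x, ∀ j, DifferentiableAt ℝ (G j) y :=
    (eventually_all.2 fun j => (hG j).eventually (by simp)).mono
      fun y hy j => (hy j).differentiableAt two_ne_zero
  simp only [elaplacian_eq_sum]
  rw [Finset.sum_comm]
  refine Finset.sum_congr rfl fun i _ => ?_
  have hsum : ∂[i] (fun y => ∑ j, G j y) =ᶠ[𝓝 x] fun y => ∑ j, ∂[i] (G j) y :=
    hnear.mono fun y hy => dirDeriv_sum _ fun j _ => hy j
  rw [hsum.dirDeriv_eq, dirDeriv_sum _ fun j _ =>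
    ((hG j).dirDeriv (m := 1) (by norm_num)).differentiableAt one_ne_zero]

theorem elaplacian_sq (hg : ContDiffAt ℝ 2 g x) :
    elaplacian (fun y => g y ^ 2) x = 2 * ∑ i, ∂[i] g x ^ 2 + 2 * g x * elaplacian g x := by
  have hnear : ∀ᶠ y in 𝓝 x, DifferentiableAt ℝ g y :=
    (hg.eventually (by simp)).mono fun y hy => hy.differentiableAt two_ne_zero
  have hg1 : DifferentiableAt ℝ g x := hg.differentiableAt two_ne_zero
  rw [elaplacian_eq_sum, elaplacian_eq_sum, Finset.mul_sum, Finset.mul_sum,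
    ← Finset.sum_add_distrib]
  refine Finset.sum_congr rfl fun i _ => ?_
  have hsq : ∂[i] (fun y => g y ^ 2) =ᶠ[𝓝 x] fun y => 2 * g y * ∂[i] g y :=
    hnear.mono fun y hy => dirDeriv_sq hy
  have hdg : DifferentiableAt ℝ (∂[i] g) x :=
    (hg.dirDeriv (m := 1) (by norm_num)).differentiableAt one_ne_zero
  rw [hsq.dirDeriv_eq, dirDeriv_mul (hg1.const_mul 2) hdg]
  simp only [dirDeriv, fderiv_const_mul hg1, smul_apply, smul_eq_mul]
  ring

theorem elaplacian_dirDeriv (hf : ContDiffAt ℝ 3 f x) (j : Fin n) :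
    elaplacian (∂[j] f) x = ∂[j] (elaplacian f) x := by
  have hsymm (i : Fin n) : ∂[i] (∂[j] f) =ᶠ[𝓝 x] ∂[j] (∂[i] f) :=
    (hf.eventually (by simp)).mono fun y hy => dirDeriv_comm (hy.of_le (by norm_num))
  have hf2 (i : Fin n) : ContDiffAt ℝ 2 (∂[i] f) x := hf.dirDeriv (by norm_num)
  rw [elaplacian_eq_sum, show elaplacian f = fun y => ∑ i, ∂[i] (∂[i] f) y from rfl,
    dirDeriv_sum _ fun i _ => ((hf2 i).dirDeriv (m := 1) (by norm_num)).differentiableAt one_ne_zero]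
  exact Finset.sum_congr rfl fun i _ => by rw [(hsymm i).dirDeriv_eq, dirDeriv_comm (hf2 i)]

theorem differentiableAt_sum_sq_dirDeriv (hf : ContDiffAt ℝ 2 f x) :
    DifferentiableAt ℝ (fun y => ∑ j, ∂[j] f y ^ 2) x :=
  DifferentiableAt.fun_sum fun _ _ =>
    ((hf.dirDeriv (m := 1) (by norm_num)).differentiableAt one_ne_zero).pow 2

theorem dirDeriv_sum_sq_dirDeriv (hf : ContDiffAt ℝ 2 f x) (i : Fin n) :
    ∂[i] (fun y => ∑ j, ∂[j] f y ^ 2) x = 2 * ∑ j, ∂[j] f x * ∂[i] (∂[j] f) x := by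
  have hdf (j : Fin n) : DifferentiableAt ℝ (∂[j] f) x :=
    (hf.dirDeriv (m := 1) (by norm_num)).differentiableAt one_ne_zero
  rw [dirDeriv_sum (G := fun j y => ∂[j] f y ^ 2) _ fun j _ => (hdf j).pow 2, Finset.mul_sum]
  exact Finset.sum_congr rfl fun j _ => by rw [dirDeriv_sq (hdf j)]; ring

theorem sum_dirDeriv_mul_dirDeriv_sum_sq_dirDeriv (hf : ContDiffAt ℝ 2 f x) :
    ∑ i, ∂[i] f x * ∂[i] (fun y => ∑ j, ∂[j] f y ^ 2) x =
      2 * ∑ i, ∑ j, ∂[i] (∂[j] f) x * ∂[i] f x * ∂[j] f x := by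
  simp only [dirDeriv_sum_sq_dirDeriv hf, Finset.mul_sum]
  exact Finset.sum_congr rfl fun i _ => Finset.sum_congr rfl fun j _ => by ring

theorem elaplacian_sum_sq_dirDeriv (hf : ContDiffAt ℝ 3 f x) :
    elaplacian (fun y => ∑ j, ∂[j] f y ^ 2) x =
      2 * ∑ i, ∑ j, ∂[i] (∂[j] f) x ^ 2 + 2 * ∑ j, ∂[j] f x * ∂[j] (elaplacian f) x := by
  have hf2 (j : Fin n) : ContDiffAt ℝ 2 (∂[j] f) x := hf.dirDeriv (by norm_num)
  rw [elaplacian_sum fun j => (hf2 j).pow 2, Finset.sum_comm, Finset.mul_sum, Finset.mul_sum,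
    ← Finset.sum_add_distrib]
  refine Finset.sum_congr rfl fun j _ => ?_
  rw [elaplacian_sq (hf2 j), elaplacian_dirDeriv hf j]
  ring

theorem elaplacian_eq_of_elaplacian_eq_neg_add (hf : ContDiffAt ℝ 3 f x)
    (hH : H =ᶠ[𝓝 x] fun y => ∑ j, ∂[j] f y ^ 2)
    (hΔf : elaplacian f =ᶠ[𝓝 x] fun y => -(L y + H y)) (hL : DifferentiableAt ℝ L x) :
    elaplacian H x = 2 * ∑ i, ∑ j, ∂[i] (∂[j] f) x ^ 2
      - 2 * ∑ j, ∂[j] f x * ∂[j] L x - 2 * ∑ j, ∂[j] f x * ∂[j] H x := by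
  have hHd : DifferentiableAt ℝ H x :=
    hH.differentiableAt_iff.2 (differentiableAt_sum_sq_dirDeriv (hf.of_le (by norm_num)))
  rw [hH.elaplacian_eq, elaplacian_sum_sq_dirDeriv hf]
  simp only [hΔf.dirDeriv_eq, dirDeriv_neg, dirDeriv_add hL hHd, mul_neg, mul_add,
    Finset.sum_neg_distrib, Finset.sum_add_distrib]
  ring

theorem elaplacian_log (hu : ContDiffAt ℝ 2 u x) (hx : u x ≠ 0) :
    elaplacian (fun y => Real.log (u y)) x =
      elaplacian u x / u x - ∑ i, ∂[i] (fun y => Real.log (u y)) x ^ 2 := by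
  simp only [elaplacian_eq_sum, Finset.sum_div, ← Finset.sum_sub_distrib]
  exact Finset.sum_congr rfl fun i _ => by rw [dirDeriv_dirDeriv_log hu hx, sq]

theorem inv_mul_ehessian (hu : ContDiffAt ℝ 2 u x) (hx : u x ≠ 0) (i j : Fin n) :
    (u x)⁻¹ * ehessian u x i j = ∂[i] (∂[j] fun y => Real.log (u y)) x
      + ∂[i] (fun y => Real.log (u y)) x * ∂[j] (fun y => Real.log (u y)) x := by
  rw [show ehessian u x i j = ∂[i] (∂[j] u) x from rfl, dirDeriv_dirDeriv_log hu hx, div_eq_inv_mul]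
  ring

theorem inv_smul_gradient_apply (hu : DifferentiableAt ℝ u x) (hx : u x ≠ 0) (i : Fin n) :
    ((u x)⁻¹ • gradient u x) i = ∂[i] (fun y => Real.log (u y)) x := by
  simp [gradient_apply_eq_dirDeriv, dirDeriv_log hu hx, div_eq_inv_mul]

theorem norm_inv_smul_gradient_sq (hu : DifferentiableAt ℝ u x) (hx : u x ≠ 0) :
    ‖(u x)⁻¹ • gradient u x‖ ^ 2 = ∑ i, ∂[i] (fun y => Real.log (u y)) x ^ 2 := by
  simp only [EuclideanSpace.norm_sq_eq, Real.norm_eq_abs, sq_abs, inv_smul_gradient_apply hu hx]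

theorem inner_inv_smul_gradient_smul_gradient (hu : DifferentiableAt ℝ u x) (hx : u x ≠ 0)
    (c : ℝ) :
    ⟪(u x)⁻¹ • gradient u x, c • gradient H x⟫ =
      c * ∑ j, ∂[j] (fun y => Real.log (u y)) x * ∂[j] H x := by
  simp only [PiLp.inner_apply, inv_smul_gradient_apply hu hx, PiLp.smul_apply,
    gradient_apply_eq_dirDeriv, Finset.mul_sum, RCLike.inner_apply, conj_trivial, smul_eq_mul]
  exact Finset.sum_congr rfl fun j _ => by ring

theorem elaplacian_log_of_elaplacian_add_eq_zero {p q : ℝ} (hu : ContDiffAt ℝ 2 u x)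
    (hx : 0 < u x) (heq : elaplacian u x + ‖gradient u x‖ ^ q * u x ^ p = 0) :
    elaplacian (fun y => Real.log (u y)) x =
      -(‖(u x)⁻¹ • gradient u x‖ ^ q * u x ^ (p + q - 1) + ‖(u x)⁻¹ • gradient u x‖ ^ 2) := by
  rw [elaplacian_log hu hx.ne', ← norm_inv_smul_gradient_sq (hu.differentiableAt two_ne_zero) hx.ne',
    eq_neg_of_add_eq_zero_left heq, norm_smul, norm_inv, Real.norm_of_nonneg hx.le,
    Real.mul_rpow (inv_nonneg.2 hx.le) (norm_nonneg _), Real.inv_rpow hx.le,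
    Real.rpow_sub_one hx.ne', Real.rpow_add hx]
  have : u x ^ q ≠ 0 := (Real.rpow_pos_of_pos hx q).ne'
  field_simp
  ring

theorem sum_dirDeriv_log_mul_dirDeriv_rpow_mul_rpow {r l : ℝ} (hu : DifferentiableAt ℝ u x)
    (hx : u x ≠ 0) (hH : DifferentiableAt ℝ H x) (hH0 : H x ≠ 0)
    (hHx : H x = ∑ j, ∂[j] (fun y => Real.log (u y)) x ^ 2)
    (hL : L = fun y => H y ^ r * u y ^ l) :
    ∑ j, ∂[j] (fun y => Real.log (u y)) x * ∂[j] L x =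
      l * L x * H x + r * (L x / H x) * ∑ j, ∂[j] (fun y => Real.log (u y)) x * ∂[j] H x := by
  subst hL
  calc _ = ∑ j, (l * (H x ^ r * u x ^ l) * ∂[j] (fun y => Real.log (u y)) x ^ 2
          + r * (H x ^ r * u x ^ l / H x) * (∂[j] (fun y => Real.log (u y)) x * ∂[j] H x)) :=
        Finset.sum_congr rfl fun j _ => by
          rw [dirDeriv_rpow_mul_rpow hH hu hH0 hx, dirDeriv_log hu hx]
          ring
    _ = _ := by rw [Finset.sum_add_distrib, ← Finset.mul_sum, ← Finset.mul_sum, ← hHx]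

theorem elaplacian_eq_of_elaplacian_log_eq {r l : ℝ} (hu : ContDiffAt ℝ 3 u x) (hx : u x ≠ 0)
    (hH : H =ᶠ[𝓝 x] fun y => ∑ j, ∂[j] (fun y => Real.log (u y)) y ^ 2) (hH0 : H x ≠ 0)
    (hΔ : elaplacian (fun y => Real.log (u y)) =ᶠ[𝓝 x] fun y => -(L y + H y))
    (hL : L = fun y => H y ^ r * u y ^ l) :
    elaplacian H x = 2 * ∑ i, ∑ j, ∂[i] (∂[j] fun y => Real.log (u y)) x ^ 2
      - 2 * l * L x * H x
      - (2 + 2 * r * (L x / H x)) * ∑ j, ∂[j] (fun y => Real.log (u y)) x * ∂[j] H x := by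
  have hf : ContDiffAt ℝ 3 (fun y => Real.log (u y)) x := hu.log hx
  have hud : DifferentiableAt ℝ u x := hu.differentiableAt (by norm_num)
  have hHd : DifferentiableAt ℝ H x :=
    hH.differentiableAt_iff.2 (differentiableAt_sum_sq_dirDeriv (hf.of_le (by norm_num)))
  have hLd : DifferentiableAt ℝ L x := by
    rw [hL]
    exact (hHd.rpow_const (.inl hH0)).mul (hud.rpow_const (.inl hx))
  rw [elaplacian_eq_of_elaplacian_eq_neg_add hf hH hΔ hLd,
    sum_dirDeriv_log_mul_dirDeriv_rpow_mul_rpow hud hx hHd hH0 hH.eq_of_nhds hL]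
  ring

end Euclidean

theorem fundamental_identity_general (n : ℕ)
    (Ω : Set (EuclideanSpace ℝ (Fin n))) (hΩ : IsOpen Ω)
    (p q : ℝ)
    (u : EuclideanSpace ℝ (Fin n) → ℝ)
    (hu : ContDiffOn ℝ 3 u Ω)
    (hpos : ∀ x ∈ Ω, 0 < u x)
    (heq : ∀ x ∈ Ω, elaplacian u x + ‖gradient u x‖ ^ q * u x ^ p = 0)
    (β : ℝ) (σ : EuclideanSpace ℝ (Fin n) → ℝ)
    (l : ℝ) (hl : l = p + q - 1)
    (H L : EuclideanSpace ℝ (Fin n) → ℝ)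
    (hH : H = fun y => ‖(u y)⁻¹ • gradient u y‖ ^ 2)
    (hL : L = fun y => ‖(u y)⁻¹ • gradient u y‖ ^ q * u y ^ l)
    (T : EuclideanSpace ℝ (Fin n) → Matrix (Fin n) (Fin n) ℝ)
    (hT : ∀ x, T x = fun i j =>
      (u x)⁻¹ * ehessian u x i j
        - ((1 + β) + σ x * (L x / H x)) *
            (((u x)⁻¹ • gradient u x) i * ((u x)⁻¹ • gradient u x) j)) :
    ∀ x ∈ Ω, gradient u x ≠ 0 →
      elaplacian H x =
        ((2 / (n : ℝ)) * (1 + β) ^ 2 - 2 * β ^ 2) * H x ^ 2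
        + ((2 / (n : ℝ)) * (1 + σ x) ^ 2 - 2 * (σ x) ^ 2) * L x ^ 2
        + ((4 / (n : ℝ)) * (1 + β) * (1 + σ x) - 4 * β * σ x - 2 * l) * H x * L x
        + (2 * (β - 1) * H x + (2 * σ x - q) * L x) *
            ⟪(u x)⁻¹ • gradient u x, (H x)⁻¹ • gradient H x⟫
        + 2 * ∑ i : Fin n, ∑ j : Fin n,
            (T x i j - (Matrix.trace (T x) / (n : ℝ)) * (if i = j then (1 : ℝ) else 0)) ^ 2 := by
  intro x hx hgx
  set f : EuclideanSpace ℝ (Fin n) → ℝ := fun y => Real.log (u y)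
  have hu3 (y : EuclideanSpace ℝ (Fin n)) (hy : y ∈ Ω) : ContDiffAt ℝ 3 u y :=
    (hu y hy).contDiffAt (hΩ.mem_nhds hy)
  have hud : DifferentiableAt ℝ u x := (hu3 x hx).differentiableAt (by norm_num)
  have hux : u x ≠ 0 := (hpos x hx).ne'
  have hf : ContDiffAt ℝ 3 f x := (hu3 x hx).log hux
  have hHf : H =ᶠ[𝓝 x] fun y => ∑ j, ∂[j] f y ^ 2 :=
    eventually_of_mem (hΩ.mem_nhds hx) fun y hy => by
      rw [hH]
      exact norm_inv_smul_gradient_sq ((hu3 y hy).differentiableAt (by norm_num)) (hpos y hy).ne'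
  have hΔf : elaplacian f =ᶠ[𝓝 x] fun y => -(L y + H y) :=
    eventually_of_mem (hΩ.mem_nhds hx) fun y hy => by
      rw [hL, hH, hl]
      exact elaplacian_log_of_elaplacian_add_eq_zero ((hu3 y hy).of_le (by norm_num)) (hpos y hy)
        (heq y hy)
  have hH0 : H x ≠ 0 := by
    rw [hH]
    exact pow_ne_zero 2 (norm_ne_zero_iff.2 (smul_ne_zero (inv_ne_zero hux) hgx))
  have hLrpow : L = fun y => H y ^ (q / 2) * u y ^ l := by
    ext y
    rw [hL, hH, ← Real.rpow_natCast_mul (norm_nonneg _)]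
    ring_nf
  have halg := fundamental_identity_algebraic (Matrix.of fun i j => ∂[i] (∂[j] f) x) (T x)
    (fun i => ∂[i] f x) (H x) (L x) (∑ j, ∂[j] f x * ∂[j] H x) l q β (σ x) hHf.eq_of_nhds hH0
    (by simpa [Matrix.trace, elaplacian_eq_sum] using hΔf.eq_of_nhds)
    (by simpa only [hHf.dirDeriv_eq, Matrix.of_apply] using
      sum_dirDeriv_mul_dirDeriv_sum_sq_dirDeriv (hf.of_le (by norm_num)))
    (fun i j => by
      simp only [hT x, inv_smul_gradient_apply hud hux,
        inv_mul_ehessian ((hu3 x hx).of_le (by norm_num)) hux, Matrix.of_apply]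
      ring)
  simp only [Fintype.card_fin] at halg
  rw [inner_inv_smul_gradient_smul_gradient hud hux, ← halg,
    elaplacian_eq_of_elaplacian_log_eq (hu3 x hx) hux hHf hH0 hΔf hLrpow]
  simp only [Matrix.of_apply]
  ring

/-- **Lemma 4.1 (Euclidean case).** Let `u > 0` be a `C³` solution of
`Δu + |∇u|^q u^p = 0` on an open set `Ω ⊆ ℝⁿ`, `l = p + q − 1`, and on the regular set
let `H = |∇ln u|²`, `L = |∇ln u|^q u^l`, `Z = L/H`.  Then for every `β ∈ ℝ` and every
function `σ`, at each regular point,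
`ΔH = A(β)H² + A(σ)L² + B(β,σ)HL + (2(β−1)H + (2σ−q)L)⟨∇ln u, ∇ln H⟩
      + 2‖T(β,σ) − (tr T(β,σ)/n)·I‖²`,
where `A(x) = (2/n)(1+x)² − 2x²`, `B(x,y) = (4/n)(1+x)(1+y) − 4xy − 2l` and
`T(β,σ) = u⁻¹∇²u − ((1+β) + σZ)·∇ln u ⊗ ∇ln u`. -/
theorem fundamental_identity (n : ℕ) (hn : 1 ≤ n)
    (Ω : Set (EuclideanSpace ℝ (Fin n))) (hΩ : IsOpen Ω)
    (p q : ℝ) (hq : 0 ≤ q)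
    (u : EuclideanSpace ℝ (Fin n) → ℝ)
    (hu : ContDiffOn ℝ 3 u Ω)
    (hpos : ∀ x ∈ Ω, 0 < u x)
    (heq : ∀ x ∈ Ω, elaplacian u x + ‖gradient u x‖ ^ q * u x ^ p = 0)
    (β : ℝ) (σ : EuclideanSpace ℝ (Fin n) → ℝ)
    (l : ℝ) (hl : l = p + q - 1)
    (H L : EuclideanSpace ℝ (Fin n) → ℝ)
    (hH : H = fun y => ‖(u y)⁻¹ • gradient u y‖ ^ 2)
    (hL : L = fun y => ‖(u y)⁻¹ • gradient u y‖ ^ q * u y ^ l)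
    (T : EuclideanSpace ℝ (Fin n) → Matrix (Fin n) (Fin n) ℝ)
    (hT : ∀ x, T x = fun i j =>
      (u x)⁻¹ * ehessian u x i j
        - ((1 + β) + σ x * (L x / H x)) *
            (((u x)⁻¹ • gradient u x) i * ((u x)⁻¹ • gradient u x) j)) :
    ∀ x ∈ Ω, gradient u x ≠ 0 →
      elaplacian H x =
        ((2 / (n : ℝ)) * (1 + β) ^ 2 - 2 * β ^ 2) * H x ^ 2
        + ((2 / (n : ℝ)) * (1 + σ x) ^ 2 - 2 * (σ x) ^ 2) * L x ^ 2
        + ((4 / (n : ℝ)) * (1 + β) * (1 + σ x) - 4 * β * σ x - 2 * l) * H x * L x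
        + (2 * (β - 1) * H x + (2 * σ x - q) * L x) *
            ⟪(u x)⁻¹ • gradient u x, (H x)⁻¹ • gradient H x⟫
        + 2 * ∑ i : Fin n, ∑ j : Fin n,
            (T x i j - (Matrix.trace (T x) / (n : ℝ)) * (if i = j then (1 : ℝ) else 0)) ^ 2 :=
  fundamental_identity_general n Ω hΩ p q u hu hpos heq β σ l hl H L hH hL T hT
end

section
/- For n ∈ ℕ, l ∈ ℝ, q ∈ [0,2), β ∈ ℝ, d ≥ 0 and σ ∈ ℝ, define A(x) = (2/n)(1+x)² − 2x², B(x,y) = (4/n)(1+x)(1+y) − 4xy − 2l, and set S₁ = ((2/n)(1+β) − β)(1+β), S₂ = B(β,σ) + (2σ+1−q)β + d(1−q/2)^{−1}(l+1+(q/2−1)β)(l+(q/2−1)β), S₃ = A(σ) − (d²q/2)(1−q/2)^{−2}(l+(q/2−1)β)² − d(1−q/2)^{−1}(l+(q/2−1)β)(2σ+1−q). Then: (1) if n = 2, q ∈ [0,2) and l ∈ ℝ is arbitrary, there exist β ≥ 0, d ≥ 0 and σ ∈ ℝ such that S₁ > 0, S₂ > 0 and S₃ > 0; (2) if n ≥ 3,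 q ∈ [0,1) and 2/(n−2) ≤ l < (2−q)²/((1−q)(n−2)), there exist β ∈ [0, 2/(n−2)), d ≥ 0 and σ ∈ ℝ such that S₁ > 0, S₂ > 0 and S₃ > 0; (3) if n ≥ 3, q ∈ [1,2) and l ≥ 2/(n−2), there exist β ∈ [0, 2/(n−2)), d ≥ 0 and σ ∈ ℝ such that S₁ > 0, S₂ > 0 and S₃ > 0. -/
/-- `A(x) = (2/n)(1+x)² − 2x²`. -/
noncomputable def Afun (n : ℕ) (x : ℝ) : ℝ := (2 / (n : ℝ)) * (1 + x) ^ 2 - 2 * x ^ 2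

/-- `B(x,y) = (4/n)(1+x)(1+y) − 4xy − 2l`. -/
noncomputable def Bfun (n : ℕ) (l x y : ℝ) : ℝ :=
  (4 / (n : ℝ)) * (1 + x) * (1 + y) - 4 * x * y - 2 * l

/-- `S₁ = ((2/n)(1+β) − β)(1+β)`. -/
noncomputable def S1 (n : ℕ) (β : ℝ) : ℝ := ((2 / (n : ℝ)) * (1 + β) - β) * (1 + β)

/-- `S₂ = B(β,σ) + (2σ+1−q)β + d(1−q/2)⁻¹(l+1+(q/2−1)β)(l+(q/2−1)β)`. -/
noncomputable def S2 (n : ℕ) (l q β d σ : ℝ) : ℝ :=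
  Bfun n l β σ + (2 * σ + 1 - q) * β
    + d * (1 - q / 2)⁻¹ * (l + 1 + (q / 2 - 1) * β) * (l + (q / 2 - 1) * β)

/-- `S₃ = A(σ) − (d²q/2)(1−q/2)⁻²(l+(q/2−1)β)² − d(1−q/2)⁻¹(l+(q/2−1)β)(2σ+1−q)`. -/
noncomputable def S3 (n : ℕ) (l q β d σ : ℝ) : ℝ :=
  Afun n σ - (d ^ 2 * q / 2) * ((1 - q / 2)⁻¹) ^ 2 * (l + (q / 2 - 1) * β) ^ 2
    - d * (1 - q / 2)⁻¹ * (l + (q / 2 - 1) * β) * (2 * σ + 1 - q)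

/-- Closed form of `S₂` when `β = 0` and `d = t(1−q/2)/l`. -/
lemma S2_closed (n : ℕ) (l q t σ : ℝ) (hln : l ≠ 0) (h2q : (2:ℝ) - q ≠ 0) :
    S2 n l q 0 (t * (1 - q / 2) / l) σ
      = (4 / (n : ℝ)) * (1 + σ) - 2 * l + t * (l + 1) := by
  unfold S2 Bfun
  have hqn : (1:ℝ) - q/2 ≠ 0 := by intro h; apply h2q; linarith
  field_simp [h2q]
  ring

/-- Closed form of `S₃` when `β = 0` and `d = t(1−q/2)/l`. -/
lemma S3_closed (n : ℕ) (l q t σ : ℝ) (hln : l ≠ 0) (h2q : (2:ℝ) - q ≠ 0) :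
    S3 n l q 0 (t * (1 - q / 2) / l) σ
      = (2 / (n : ℝ)) * (1 + σ) ^ 2 - 2 * σ ^ 2 - q / 2 * t ^ 2 - t * (2 * σ + 1 - q) := by
  unfold S3 Afun
  have hqn : (1:ℝ) - q/2 ≠ 0 := by intro h; apply h2q; linarith
  field_simp [h2q]
  ring

/-- **Lemma 4.4.** Positivity of the coefficients `S₁, S₂, S₃` in the three cases:
(1) `n = 2`, `q ∈ [0,2)`, `l ∈ ℝ` arbitrary;
(2) `n ≥ 3`, `q ∈ [0,1)`, `2/(n−2) ≤ l < (2−q)²/((1−q)(n−2))`;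
(3) `n ≥ 3`, `q ∈ [1,2)`, `l ≥ 2/(n−2)`.
In cases (2) and (3) the parameter `β` can be taken in `[0, 2/(n−2))`. -/
theorem coefficients_positive :
    (∀ l q : ℝ, 0 ≤ q → q < 2 →
      ∃ β ≥ (0 : ℝ), ∃ d ≥ (0 : ℝ), ∃ σ : ℝ,
        0 < S1 2 β ∧ 0 < S2 2 l q β d σ ∧ 0 < S3 2 l q β d σ) ∧
    (∀ n : ℕ, 3 ≤ n → ∀ l q : ℝ, 0 ≤ q → q < 1 →
      2 / ((n : ℝ) - 2) ≤ l → l < (2 - q) ^ 2 / ((1 - q) * ((n : ℝ) - 2)) →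
      ∃ β : ℝ, 0 ≤ β ∧ β < 2 / ((n : ℝ) - 2) ∧ ∃ d ≥ (0 : ℝ), ∃ σ : ℝ,
        0 < S1 n β ∧ 0 < S2 n l q β d σ ∧ 0 < S3 n l q β d σ) ∧
    (∀ n : ℕ, 3 ≤ n → ∀ l q : ℝ, 1 ≤ q → q < 2 → 2 / ((n : ℝ) - 2) ≤ l →
      ∃ β : ℝ, 0 ≤ β ∧ β < 2 / ((n : ℝ) - 2) ∧ ∃ d ≥ (0 : ℝ), ∃ σ : ℝ,
        0 < S1 n β ∧ 0 < S2 n l q β d σ ∧ 0 < S3 n l q β d σ) := by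
  refine ⟨?_, ?_, ?_⟩
  · -- Case 1 : n = 2.  Take β = 2|l|, d = 0, σ = 0.
    intro l q hq0 hq2
    refine ⟨2 * |l|, by positivity, 0, le_refl _, 0, ?_, ?_, ?_⟩
    · unfold S1; nlinarith [abs_nonneg l]
    · unfold S2 Bfun
      have h1 := le_abs_self l
      have h2 := abs_nonneg l
      push_cast
      nlinarith
    · unfold S3 Afun; norm_num
  · -- Case 2 : n ≥ 3, q ∈ [0,1).  Take β = 0, σ = −1, t = 3 − q.
    intro n hn l q hq0 hq1 hl _
    have hn3 : (3 : ℝ) ≤ (n : ℝ) := by exact_mod_cast hn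
    have hn2 : (0 : ℝ) < (n : ℝ) - 2 := by linarith
    have hn0 : (0 : ℝ) < (n : ℝ) := by linarith
    have hb : (0 : ℝ) < 2 / ((n : ℝ) - 2) := by positivity
    have hl0 : (0 : ℝ) < l := lt_of_lt_of_le hb hl
    have hln : l ≠ 0 := ne_of_gt hl0
    have h2q : (2 : ℝ) - q ≠ 0 := by intro h; linarith
    refine ⟨0, le_refl _, hb, (3 - q) * (1 - q / 2) / l,
      le_of_lt (div_pos (mul_pos (by linarith) (by linarith)) hl0), -1, ?_, ?_, ?_⟩
    · unfold S1
      have h2n : (0 : ℝ) < 2 / (n : ℝ) := by positivity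
      nlinarith
    · rw [S2_closed n l q (3 - q) (-1) hln h2q]
      nlinarith
    · rw [S3_closed n l q (3 - q) (-1) hln h2q]
      nlinarith [mul_pos (mul_pos (by linarith : (0:ℝ) < 1 - q) (by linarith : (0:ℝ) < 1 - q))
        (by linarith : (0:ℝ) < 2 - q)]
  · -- Case 3 : n ≥ 3, q ∈ [1,2).  Take β = 0, ε = 1/(l+1), σ = −1+ε/2, t = 2−ε.
    intro n hn l q hq1 hq2 hl
    have hn3 : (3 : ℝ) ≤ (n : ℝ) := by exact_mod_cast hn
    have hn2 : (0 : ℝ) < (n : ℝ) - 2 := by linarith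
    have hn0 : (0 : ℝ) < (n : ℝ) := by linarith
    have hb : (0 : ℝ) < 2 / ((n : ℝ) - 2) := by positivity
    have hl0 : (0 : ℝ) < l := lt_of_lt_of_le hb hl
    have hln : l ≠ 0 := ne_of_gt hl0
    have h2q : (2 : ℝ) - q ≠ 0 := by intro h; linarith
    have hL : (0 : ℝ) < l + 1 := by linarith
    set ε : ℝ := 1 / (l + 1) with hε
    have hε0 : 0 < ε := by positivity
    have hε1 : ε < 1 := by rw [hε, div_lt_one hL]; linarith
    have hεL : ε * (l + 1) = 1 := by rw [hε]; field_simp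
    refine ⟨0, le_refl _, hb, (2 - ε) * (1 - q / 2) / l,
      le_of_lt (div_pos (mul_pos (by linarith) (by linarith)) hl0), -1 + ε / 2, ?_, ?_, ?_⟩
    · unfold S1
      have h2n : (0 : ℝ) < 2 / (n : ℝ) := by positivity
      nlinarith
    · rw [S2_closed n l q (2 - ε) (-1 + ε / 2) hln h2q]
      have h4n : (0 : ℝ) < 4 / (n : ℝ) := by positivity
      nlinarith [mul_pos h4n hε0]
    · rw [S3_closed n l q (2 - ε) (-1 + ε / 2) hln h2q]
      have h2n : (0 : ℝ) < 2 / (n : ℝ) := by positivity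
      nlinarith [mul_pos h2n (mul_pos hε0 hε0),
        mul_nonneg (mul_nonneg (by linarith : (0:ℝ) ≤ q - 1) hε0.le)
          (by linarith : (0:ℝ) ≤ 1 - ε / 2)]
end
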